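/- arXiv:1209.3296 — 3 statements merged into one kernel-verified Lean document; each statement's English description precedes it below -/
import Mathlib

section
/- Assume c is an integer with c > h(R₀) := ⟨ρ,ϑ∨⟩ + 1, where ρ is the half-sum of the positive roots of R₀ (so that W preserves P and each T̂_a restricts to an operator on functions P → ℂ). For each w ∈ W fix a reduced expression w = u∘s_{a_{j₁}}∘⋯∘s_{a_{jℓ}} with u ∈ Ω and ℓ = ℓ(w), and set T̂_w := u∘T̂_{j₁}∘⋯∘T̂_{jℓ} acting on functions P → ℂ. Then the family {T̂_w : w ∈ W} is linearly independent: for every finite S ⊆ W and complex coefficients (a_w)_{w∈S}, if ∑_{w∈S} a_w T̂_w annihilates every function P → ℂ, then a_w = 0 for all w ∈ S. In other words, the difference-reflection representation of the extended affine Hecke algebra on functions over the weight lattice is faithful. -/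
open scoped RealInnerProductSpace BigOperators Classical

noncomputable section

/-- Alternating composition `A ∘ B ∘ A ∘ ⋯` with `m` factors (starting with `A`). -/
def altComp {α : Type*} (A B : α → α) : ℕ → (α → α)
  | 0 => id
  | m + 1 => A ∘ altComp B A m

/-- The sign of a real number, as an integer (with `sgnZ 0 = 0`). -/
def sgnZ (x : ℝ) : ℤ := if 0 < x then 1 else if x < 0 then -1 else 0

/-- The function `v(x) = (1-t²)∫₀ˣ dy/(1-2t cos y+t²)`. -/
def mvfun (t x : ℝ) : ℝ :=
  (1 - t ^ 2) * ∫ y in (0:ℝ)..x, 1 / (1 - 2 * t * Real.cos y + t ^ 2)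

section AffineOps

variable {V : Type*} [NormedAddCommGroup V] [InnerProductSpace ℝ V]

/-- The coroot `α∨ = 2α/⟨α,α⟩`. -/
def coroot (α : V) : V := (2 / ⟪α, α⟫) • α

/-- The affine root `a = α∨ + r c` (encoded as the pair `(α, r)`), as an affine
function on `V`. -/
def aval (c : ℝ) (a : V × ℤ) (x : V) : ℝ := ⟪x, coroot a.1⟫ + a.2 * c

/-- The affine reflection `s_a(x) = x - a(x) α` attached to `a = α∨ + r c`. -/
def sAff (c : ℝ) (a : V × ℤ) (x : V) : V := x - aval c a x • a.1

/-- `w` maps the affine root `a` to the affine root `b`, i.e. `(wa)(x) = a(w⁻¹x) = b(x)`. -/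
def mapsRoot (c : ℝ) (w : Equiv.Perm V) (a b : V × ℤ) : Prop :=
  ∀ x : V, aval c a (w⁻¹ x) = aval c b x

/-- The linear part `w′` of an affine transformation `w`. -/
def linPart (w : Equiv.Perm V) (x : V) : V := w x - w 0

variable {R : Type*} [Field R]

/-- The difference-reflection operator `T̂_a`. -/
def hatT (c : ℝ) (τ : V × ℤ → R) (a : V × ℤ) (f : V → R) (x : V) : R :=
  if 0 < aval c a x then τ a * f (sAff c a x)
  else if aval c a x = 0 then τ a * f x
  else (τ a)⁻¹ * f (sAff c a x) + (τ a - (τ a)⁻¹) * f x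

/-- The discrete integral operator `J_a`. -/
def Jop (c : ℝ) (a : V × ℤ) (f : V → R) (x : V) : R :=
  if 0 < aval c a x then
    - ∑ k ∈ Finset.Icc (1 : ℤ) ⌊aval c a x⌋, f (x - k • a.1)
  else if aval c a x = 0 then 0
  else ∑ k ∈ Finset.Ico (0 : ℤ) (-⌊aval c a x⌋), f (x + k • a.1)

/-- The integral-reflection operator `I_a = τ_a s_a + (τ_a - τ_a⁻¹) J_a`. -/
def Iop (c : ℝ) (τ : V × ℤ → R) (a : V × ℤ) (f : V → R) (x : V) : R :=
  τ a * f (sAff c a x) + (τ a - (τ a)⁻¹) * Jop c a f x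

end AffineOps

/-- An irreducible reduced crystallographic root system spanning `V`, together with a
choice of positive roots, simple roots, and the highest short root. -/
structure RootSystemData (V : Type*) [NormedAddCommGroup V] [InnerProductSpace ℝ V] :
    Type _ where
  n : ℕ
  n_pos : 1 ≤ n
  rank_eq : Module.finrank ℝ V = n
  R0 : Finset V
  ne_zero : ∀ α ∈ R0, α ≠ (0 : V)
  span_top : Submodule.span ℝ (R0 : Set V) = ⊤
  reduced : ∀ α ∈ R0, ∀ t : ℝ, t • α ∈ R0 → t = 1 ∨ t = -1
  crystallographic : ∀ α ∈ R0, ∀ β ∈ R0, ∃ k : ℤ, ⟪β, coroot α⟫ = (k : ℝ)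
  reflect_mem : ∀ α ∈ R0, ∀ β ∈ R0, β - ⟪β, coroot α⟫ • α ∈ R0
  irreducible : ∀ S : Finset V, S ⊆ R0 →
      (∀ a ∈ S, ∀ b ∈ R0, b ∉ S → ⟪a, b⟫ = 0) → S = ∅ ∨ S = R0
  pos : Finset V
  pos_subset : pos ⊆ R0
  pos_or_neg : ∀ α ∈ R0, α ∈ pos ∨ -α ∈ pos
  pos_not_both : ∀ α ∈ pos, -α ∉ pos
  pos_add : ∀ α ∈ pos, ∀ β ∈ pos, α + β ∈ R0 → α + β ∈ pos
  simpleRoot : Fin n → V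
  simpleRoot_mem : ∀ j, simpleRoot j ∈ pos
  pos_natCombo : ∀ α ∈ pos, ∃ k : Fin n → ℕ, α = ∑ j, (k j : ℝ) • simpleRoot j
  hshort : V
  hshort_mem : hshort ∈ pos
  hshort_short : ∀ α ∈ R0, ‖hshort‖ ≤ ‖α‖
  hshort_highest : ∀ α ∈ R0, ‖α‖ = ‖hshort‖ →
      ∃ k : Fin n → ℕ, hshort - α = ∑ j, (k j : ℝ) • simpleRoot j

namespace RootSystemData

variable {V : Type*} [NormedAddCommGroup V] [InnerProductSpace ℝ V]
variable (D : RootSystemData V)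

/-- The weight lattice `P`. -/
def weightLattice : Set V :=
  {x : V | ∀ α ∈ D.R0, ∃ k : ℤ, ⟪x, coroot α⟫ = (k : ℝ)}

/-- The root lattice `Q`. -/
def rootLattice : Set V := (Submodule.span ℤ (D.R0 : Set V) : Set V)

/-- The coweight lattice `P∨`. -/
def coweightLattice : Set V :=
  {x : V | ∀ α ∈ D.R0, ∃ k : ℤ, ⟪x, α⟫ = (k : ℝ)}

/-- The dominant cone. -/
def dominant : Set V := {x : V | ∀ α ∈ D.pos, 0 ≤ ⟪x, coroot α⟫}

/-- `ω` is a minuscule (dominant) weight. -/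
def IsMinuscule (ω : V) : Prop :=
  ω ∈ D.weightLattice ∧ ω ∈ D.dominant ∧ ω ≠ 0 ∧
    ∀ α ∈ D.pos, ⟪ω, coroot α⟫ ≤ 1

/-- `ω` is the quasi-minuscule weight, i.e. the highest short root. -/
def IsQuasiMinuscule (ω : V) : Prop := ω = D.hshort

/-- The saturated set `P_ϑ` containing the (quasi-)minuscule weights. -/
def Ptheta : Set V :=
  {ν : V | ν ∈ D.weightLattice ∧ ∀ α ∈ D.R0, α ≠ ν → |⟪ν, coroot α⟫| ≤ 1}

/-- Half sum of the positive roots. -/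
def rhoHalf : V := (2⁻¹ : ℝ) • ∑ α ∈ D.pos, α

/-- Half sum of the positive coroots. -/
def rhoVee : V := (2⁻¹ : ℝ) • ∑ α ∈ D.pos, coroot α

/-- `(α, r)` encodes an affine root. -/
def IsAffRoot (a : V × ℤ) : Prop := a.1 ∈ D.R0

/-- `(α, r)` encodes a positive affine root. -/
def IsAffPos (a : V × ℤ) : Prop :=
  a.1 ∈ D.R0 ∧ (1 ≤ a.2 ∨ (a.2 = 0 ∧ a.1 ∈ D.pos))

/-- `(α, r)` encodes a negative affine root. -/
def IsAffNeg (a : V × ℤ) : Prop := D.IsAffPos (-a.1, -a.2)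

/-- The simple affine roots `a₀ = -ϑ∨ + c`, `a_j = α_j∨`. -/
def aSimple (j : Fin (D.n + 1)) : V × ℤ :=
  Fin.cons (α := fun _ => V × ℤ) (-D.hshort, (1 : ℤ))
    (fun i => (D.simpleRoot i, (0 : ℤ))) j

/-- The reflections generating the finite Weyl group `W₀`. -/
def W0Gens : Set (Equiv.Perm V) :=
  {e | ∃ α ∈ D.R0, ∀ x, e x = x - ⟪x, coroot α⟫ • α}

/-- The finite Weyl group `W₀`. -/
def W0 : Subgroup (Equiv.Perm V) := Subgroup.closure D.W0Gens

variable (c : ℝ)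

/-- The affine reflections generating the affine Weyl group `W_R`. -/
def AffGens : Set (Equiv.Perm V) :=
  {e | ∃ a : V × ℤ, D.IsAffRoot a ∧ ∀ x, e x = sAff c a x}

/-- The affine Weyl group `W_R`. -/
def WR : Subgroup (Equiv.Perm V) := Subgroup.closure (D.AffGens c)

/-- The translations `t_{cλ}`, `λ ∈ P`. -/
def TransGens : Set (Equiv.Perm V) :=
  {e | ∃ lam ∈ D.weightLattice, ∀ x : V, e x = x + c • lam}

/-- The extended affine Weyl group `W = W₀ ⋉ t(cP)`. -/
def Wext : Subgroup (Equiv.Perm V) :=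
  Subgroup.closure (D.AffGens c ∪ D.TransGens c)

/-- The set `R(w) = R⁺ ∩ w⁻¹(R⁻)`. -/
def RW (w : Equiv.Perm V) : Set (V × ℤ) :=
  {a | D.IsAffPos a ∧ ∃ b : V × ℤ, D.IsAffNeg b ∧ mapsRoot c w a b}

/-- The length `ℓ(w) = #R(w)`. -/
def len (w : Equiv.Perm V) : ℕ := (D.RW c w).ncard

/-- The closed fundamental alcove `A_c`. -/
def alcove : Set V := {x | ∀ a : V × ℤ, D.IsAffPos a → 0 ≤ aval c a x}

/-- `wmin x` is the unique shortest element of the affine Weyl group mapping `x` into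
the fundamental alcove. -/
def IsWmin (wmin : V → Equiv.Perm V) : Prop :=
  ∀ x : V, wmin x ∈ D.WR c ∧ (wmin x) x ∈ D.alcove c ∧
    ∀ w ∈ D.WR c, w x ∈ D.alcove c → D.len c (wmin x) < D.len c w ∨ w = wmin x

/-- One step in the Bruhat order: `w < w s_a` whenever `ℓ(w) < ℓ(w s_a)`. -/
def bruhatStep (w w' : Equiv.Perm V) : Prop :=
  ∃ a : V × ℤ, D.IsAffPos a ∧ ∃ e : Equiv.Perm V,
    (∀ x, e x = sAff c a x) ∧ w' = w * e ∧ D.len c w < D.len c w'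

/-- The Bruhat order on the affine Weyl group. -/
def bruhatLE (w w' : Equiv.Perm V) : Prop :=
  Relation.ReflTransGen (D.bruhatStep c) w w'

/-- The partial order on `V`: `x ≤ y` iff `x₊ = y₊` and `w_x ≤ w_y` (Bruhat). -/
def vle (wmin : V → Equiv.Perm V) (x y : V) : Prop :=
  (wmin x) x = (wmin y) y ∧ D.bruhatLE c (wmin x) (wmin y)

/-- The interval `[x, y]` for the order `vle`. -/
def vInterval (wmin : V → Equiv.Perm V) (x y : V) : Set V :=
  {z : V | D.vle c wmin x z ∧ D.vle c wmin z y}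

/-- The partial order `⪯` on the weight lattice:
`μ ⪯ λ` iff `λ - μ ∈ Q` and `Conv [μ₊, μ] ⊆ Conv [λ₊, λ]`. -/
def pleq (wmin : V → Equiv.Perm V) (μ lam : V) : Prop :=
  lam - μ ∈ D.rootLattice ∧
    convexHull ℝ (D.vInterval c wmin ((wmin μ) μ) μ)
      ⊆ convexHull ℝ (D.vInterval c wmin ((wmin lam) lam) lam)

section Ops

variable {R : Type*} [Field R]

/-- `τ` is a multiplicity function: nonvanishing on affine roots, and invariant
under the (extended affine) Weyl group action on the affine roots. -/
def IsMultiplicity (τ : V × ℤ → R) : Prop :=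
  (∀ a : V × ℤ, D.IsAffRoot a → τ a ≠ 0) ∧
    ∀ w ∈ D.Wext c, ∀ a b : V × ℤ, D.IsAffRoot a → D.IsAffRoot b →
      mapsRoot c w a b → τ a = τ b

/-- `τ_w = ∏_{a ∈ R(w)} τ_a`. -/
def tauw (τ : V × ℤ → R) (w : Equiv.Perm V) : R := ∏ᶠ a ∈ D.RW c w, τ a

/-- `τ₀`, the multiplicity of the affine simple root `a₀`. -/
def tauZero (τ : V × ℤ → R) : R := τ (-D.hshort, (1 : ℤ))

/-- The operator `I_{j₁} ∘ ⋯ ∘ I_{jℓ}` attached to a word in the simple reflections. -/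
def wordOp (τ : V × ℤ → R) (l : List (Fin (D.n + 1))) : (V → R) → V → R :=
  (l.map fun j => Iop c τ (D.aSimple j)).foldr (· ∘ ·) id

/-- `l` is a reduced word for `w`, i.e. `w = s_{j₁} ∘ ⋯ ∘ s_{jℓ}` with `ℓ = ℓ(w)`. -/
def IsReducedWord (w : Equiv.Perm V) (l : List (Fin (D.n + 1))) : Prop :=
  l.length = D.len c w ∧
    ∀ x : V, w x = ((l.map fun j => sAff c (D.aSimple j)).foldr (· ∘ ·) id) x

/-- `e∨_τ(η) = ∏_{α ∈ R₀⁺} τ_{α∨}^{⟨η,α∨⟩}`. -/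
def etau (τ : V × ℤ → R) (η : V) : R :=
  ∏ α ∈ D.pos, τ (α, (0 : ℤ)) ^ ⌊⟪η, coroot α⟫⌋

/-- `h∨_τ = τ₀² e∨_τ(ϑ)`. -/
def hvee (τ : V × ℤ → R) : R := D.tauZero τ ^ 2 * D.etau τ D.hshort

/-- `θ(μ) = #{b ∈ R(w_μ) : b(μ) = -2}`. -/
def theta (wmin : V → Equiv.Perm V) (μ : V) : ℕ :=
  {b : V × ℤ | b ∈ D.RW c (wmin μ) ∧ aval c b μ = -2}.ncard

/-- The coefficient `c_{λ,η} = θ(λ-η) e∨_τ(η) (h∨_τ)^{-sign⟨λ,η∨⟩}`. -/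
def ccoef (τ : V × ℤ → R) (wmin : V → Equiv.Perm V) (lam η : V) : R :=
  (D.theta c wmin (lam - η) : R) * D.etau τ η *
    D.hvee τ ^ (-sgnZ ⟪lam, coroot η⟫)

/-- The coefficient `a_{λ,ν} = τ_{w_{w_λ(λ-ν)}} τ_{w_{w_λ(λ-ν)} w_λ} τ_{w_λ}⁻¹`. -/
def acoef (τ : V × ℤ → R) (wmin : V → Equiv.Perm V) (lam ν : V) : R :=
  D.tauw c τ (wmin ((wmin lam) (lam - ν))) *
    D.tauw c τ (wmin ((wmin lam) (lam - ν)) * wmin lam) *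
    (D.tauw c τ (wmin lam))⁻¹

/-- The coefficient `b_{λ,ν}`. -/
def bcoef (τ : V × ℤ → R) (wmin : V → Equiv.Perm V) (lam ν : V) : R :=
  if (wmin (lam - ν)) (lam - ν) = (wmin lam) lam then
    D.tauw c τ (wmin ((wmin lam) (lam - ν))) ^ 2 *
      (if D.IsAffNeg (ν, ⌊(1 - ⟪lam, coroot ν⟫) / c⌋) then 1 else 0)
  else D.ccoef c τ wmin ((wmin lam) lam) (linPart (wmin lam) ν)

/-- The intertwining operator `(𝒥f)(λ) = τ_{w_λ}⁻¹ (I_{w_λ} f)(λ₊)`, where `Iw` assigns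
to each `w_λ` the composite of integral-reflection operators along a reduced word. -/
def Jcal (τ : V × ℤ → R) (wmin : V → Equiv.Perm V)
    (Iw : Equiv.Perm V → (V → R) → V → R) (f : V → R) (x : V) : R :=
  (D.tauw c τ (wmin x))⁻¹ * Iw (wmin x) f ((wmin x) x)

end Ops

/-- The Yang–Yang type Morse function `𝒱_μ`. -/
def morse (t : V → ℝ) (μ ξ : V) : ℝ :=
  (c / 2) * ⟪ξ, ξ⟫ - 2 * Real.pi * ⟪D.rhoVee + μ, ξ⟫ +
    ∑ α ∈ D.pos, (2 / ⟪α, α⟫) * ∫ x in (0:ℝ)..(⟪ξ, α⟫), mvfun (t α) x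

/-- The critical equation `cξ + ∑_{α>0} v_α(⟨ξ,α⟩) α∨ = 2π(ρ∨+μ)`. -/
def criticalEq (t : V → ℝ) (μ ξ : V) : Prop :=
  c • ξ + ∑ α ∈ D.pos, mvfun (t α) ⟪ξ, α⟫ • coroot α
    = (2 * Real.pi) • (D.rhoVee + μ)

/-- The Hessian bilinear form `H_{η,ζ}(ξ)`. -/
def hessForm (t : V → ℝ) (ξ η ζ : V) : ℝ :=
  c * ⟪η, ζ⟫ + ∑ α ∈ D.R0,
    (1 - t α ^ 2) * ⟪η, α⟫ * ⟪ζ, α⟫ /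
      (⟪α, α⟫ * (1 - 2 * t α * Real.cos ⟪ξ, α⟫ + t α ^ 2))

/-- `κ_± = (2/n) ∑_{α>0} (1-t_α²)/(1 ± |t_α|)²`; here `s = ±1`. -/
def kappaPM (t : V → ℝ) (s : ℝ) : ℝ :=
  (2 / (D.n : ℝ)) * ∑ α ∈ D.pos, (1 - t α ^ 2) / (1 + s * |t α|) ^ 2

end RootSystemData

/-!
Each `T̂_a` only mixes the values `f x` and `f (s_a x)`, so `(T̂_w f)(λ)` is a combination of
the values `f ((u s_m)⁻¹ λ)` over the subwords `m` of the chosen reduced word, with a nonzero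
coefficient on the full word. Since `s_j` permutes the positive affine roots other than `a_j`,
`ℓ(w s_j) ≤ ℓ(w) + 1`, hence `ℓ(u s_m) ≤ |m|`. So if `w₀` has maximal length in `S`, no proper
subword of a reduced word of any `v ∈ S` produces `w₀`. Take a weight `λ` (in the root lattice)
fixed by none of the finitely many nontrivial affine maps `u_v s_m w₀⁻¹`: the delta function at
`w₀⁻¹ λ` is then seen at `λ` by `T̂_{w₀}` and by no other `T̂_v`, which kills the coefficient of
`w₀`, and induction on `S` finishes.
-/

lemma forall_eq_zero_of_sum_mul_eq_zero_of_separating {ι X K : Type*} [Semiring K]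
    [NoZeroDivisors K] (F : ι → X → K) (coef : ι → K) (S : Finset ι)
    (hsep : ∀ s ⊆ S, s.Nonempty → ∃ i ∈ s, ∃ x, F i x ≠ 0 ∧ ∀ j ∈ s, j ≠ i → F j x = 0)
    (hsum : ∀ x, ∑ i ∈ S, coef i * F i x = 0) : ∀ i ∈ S, coef i = 0 := by
  induction S using Finset.strongInduction with
  | H S ih =>
    intro i hi
    obtain ⟨i₀, hi₀, x, hx, hzero⟩ := hsep S subset_rfl ⟨i, hi⟩
    have hcoef : coef i₀ = 0 := by
      have h := hsum x
      rw [Finset.sum_eq_single_of_mem i₀ hi₀ fun j hj hne => by rw [hzero j hj hne, mul_zero]]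
        at h
      exact (mul_eq_zero.1 h).resolve_right hx
    by_cases hii₀ : i = i₀
    · exact hii₀ ▸ hcoef
    refine ih _ (Finset.erase_ssubset hi₀) (fun s hs => hsep s (hs.trans (S.erase_subset i₀)))
      (fun x => ?_) i (Finset.mem_erase.2 ⟨hii₀, hi⟩)
    rw [Finset.sum_erase S (by rw [hcoef, zero_mul])]
    exact hsum x

section Reflections

variable {V : Type*} [NormedAddCommGroup V] [InnerProductSpace ℝ V]

lemma inner_coroot (x α : V) : ⟪x, coroot α⟫ = 2 * ⟪x, α⟫ / ⟪α, α⟫ := by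
  rw [coroot, real_inner_smul_right]; ring

lemma inner_self_coroot {α : V} (hα : α ≠ 0) : ⟪α, coroot α⟫ = 2 := by
  have : ⟪α, α⟫ ≠ 0 := inner_self_ne_zero.2 hα
  rw [inner_coroot]; field_simp

lemma inner_coroot_nonneg_iff (x : V) {α : V} (hα : α ≠ 0) :
    0 ≤ ⟪x, coroot α⟫ ↔ 0 ≤ ⟪x, α⟫ := by
  have : 0 < 2 / ⟪α, α⟫ := div_pos two_pos (real_inner_self_pos.2 hα)
  rw [coroot, real_inner_smul_right, mul_nonneg_iff_of_pos_left this]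

lemma inner_coroot_eq_zero_iff (x : V) {α : V} (hα : α ≠ 0) :
    ⟪x, coroot α⟫ = 0 ↔ ⟪x, α⟫ = 0 := by
  have : 2 / ⟪α, α⟫ ≠ 0 := (div_pos two_pos (real_inner_self_pos.2 hα)).ne'
  rw [coroot, real_inner_smul_right, mul_eq_zero, or_iff_right this]

lemma coroot_neg (α : V) : coroot (-α) = -coroot α := by
  simp [coroot]

lemma inner_self_reflect {α : V} (hα : α ≠ 0) (β : V) :
    ⟪β - ⟪β, coroot α⟫ • α, β - ⟪β, coroot α⟫ • α⟫ = ⟪β, β⟫ := by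
  have : ⟪α, α⟫ ≠ 0 := inner_self_ne_zero.2 hα
  simp only [inner_sub_left, inner_sub_right, real_inner_smul_left, real_inner_smul_right,
    inner_coroot, real_inner_comm α β]
  field_simp
  ring

lemma norm_reflect {α : V} (hα : α ≠ 0) (β : V) : ‖β - ⟪β, coroot α⟫ • α‖ = ‖β‖ := by
  have h := inner_self_reflect hα β
  rw [real_inner_self_eq_norm_sq, real_inner_self_eq_norm_sq] at h
  exact (sq_eq_sq₀ (norm_nonneg _) (norm_nonneg _)).1 h

lemma coroot_reflect {α : V} (hα : α ≠ 0) (β : V) :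
    coroot (β - ⟪β, coroot α⟫ • α) = coroot β - ⟪α, coroot β⟫ • coroot α := by
  rw [coroot, inner_self_reflect hα]
  simp only [coroot, smul_sub, smul_smul, real_inner_smul_right, real_inner_comm α β]
  congr 2
  ring

lemma aval_sAff_self (c : ℝ) {a : V × ℤ} (ha : a.1 ≠ 0) (x : V) :
    aval c a (sAff c a x) = -aval c a x := by
  simp only [aval, sAff, inner_sub_left, real_inner_smul_left, inner_self_coroot ha]
  ring

lemma sAff_sAff (c : ℝ) {a : V × ℤ} (ha : a.1 ≠ 0) (x : V) : sAff c a (sAff c a x) = x := by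
  rw [sAff, aval_sAff_self c ha, sAff, neg_smul, sub_neg_eq_add, sub_add_cancel]

/-- The affine root `a ∘ s_A`; the floor only converts the integer `⟨A.1, (a.1)∨⟩` to `ℤ`. -/
def reflRoot (A a : V × ℤ) : V × ℤ :=
  (a.1 - ⟪a.1, coroot A.1⟫ • A.1, a.2 - A.2 * ⌊⟪A.1, coroot a.1⟫⌋)

lemma aval_reflRoot {A a : V × ℤ} (hA : A.1 ≠ 0) (hk : ∃ k : ℤ, ⟪A.1, coroot a.1⟫ = k)
    (c : ℝ) (y : V) : aval c (reflRoot A a) y = aval c a (sAff c A y) := by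
  obtain ⟨k, hk⟩ := hk
  simp only [reflRoot, aval, sAff, coroot_reflect hA, inner_sub_left, inner_sub_right,
    real_inner_smul_left, real_inner_smul_right, hk, Int.floor_intCast]
  push_cast
  ring

lemma reflRoot_reflRoot {A a : V × ℤ} (hA : A.1 ≠ 0) (hk : ∃ k : ℤ, ⟪A.1, coroot a.1⟫ = k) :
    reflRoot A (reflRoot A a) = a := by
  obtain ⟨k, hk⟩ := hk
  have hk' : ⟪A.1, coroot (reflRoot A a).1⟫ = ((-k : ℤ) : ℝ) := by
    rw [reflRoot, coroot_reflect hA, inner_sub_right, real_inner_smul_right,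
      inner_self_coroot hA, hk]
    push_cast; ring
  ext
  · simp only [reflRoot, inner_sub_left, real_inner_smul_left, inner_self_coroot hA]
    module
  · rw [reflRoot, hk', Int.floor_intCast]
    simp only [reflRoot, hk, Int.floor_intCast]
    ring

end Reflections

section AffinePerms

variable (k V : Type*) [Ring k] [AddCommGroup V] [Module k V]

def affinePerms : Subgroup (Equiv.Perm V) where
  carrier := {g | ∃ f : V →ᵃ[k] V, ⇑f = ⇑g}
  mul_mem' := by
    rintro g h ⟨f, hf⟩ ⟨f', hf'⟩
    exact ⟨f.comp f', by rw [AffineMap.coe_comp, hf, hf']; rfl⟩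
  one_mem' := ⟨AffineMap.id k V, rfl⟩
  inv_mem' := by
    rintro g ⟨f, hf⟩
    have hbij : Function.Bijective f := hf ▸ g.bijective
    refine ⟨(AffineEquiv.ofBijective hbij).symm.toAffineMap, ?_⟩
    change ⇑(AffineEquiv.ofBijective hbij).symm.toEquiv = _
    rw [AffineEquiv.ofBijective.symm_eq]
    ext x
    apply g.injective
    rw [show g (g⁻¹ x) = x from g.apply_symm_apply x, ← congrFun hf]
    exact Equiv.ofBijective_apply_symm_apply _ hbij x

end AffinePerms

section LatticePoints

variable {k V : Type*} [Field k] [CharZero k] [AddCommGroup V] [Module k V]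

/-- Along the line `x + ℤ v`, the displacement `f y - y` is affine in `n`, so it vanishes
at most once unless it vanishes identically. -/
lemma finite_setOf_apply_add_zsmul_eq (f : V →ᵃ[k] V) {x v : V}
    (h : ¬(f x = x ∧ f.linear v = v)) : {n : ℤ | f (x + n • v) = x + n • v}.Finite := by
  have hf : ∀ n : ℤ, f (x + n • v) = f x + n • f.linear v := fun n => by
    rw [add_comm x, ← vadd_eq_add, f.map_vadd, vadd_eq_add, map_zsmul, add_comm]
  by_cases hv : f.linear v = v
  · refine Set.Finite.subset Set.finite_empty fun n hn => ?_
    have hn : f x + n • v = x + n • v := by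
      rw [Set.mem_ofPred_eq, hf, hv] at hn; exact hn
    exact h ⟨add_right_cancel hn, hv⟩
  · refine Set.Subsingleton.finite fun n hn n' hn' => ?_
    have hsub : ((n - n' : ℤ) : k) • (f.linear v - v) = 0 := by
      have hn : f x + n • f.linear v = x + n • v := by rw [← hf]; exact hn
      have hn' : f x + n' • f.linear v = x + n' • v := by rw [← hf]; exact hn'
      rw [Int.cast_smul_eq_zsmul]
      linear_combination (norm := module) hn - hn'
    rcases smul_eq_zero.1 hsub with h0 | h0
    · exact_mod_cast sub_eq_zero.1 (Int.cast_eq_zero.1 h0)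
    · exact absurd (sub_eq_zero.1 h0) hv

/-- Having avoided the fixed points of all but one map `σ`, move along a line `x + ℤ v` whose
direction `v ∈ Λ` is moved by the linear part of `σ`: each map fixes only finitely many of its
points. -/
lemma exists_mem_forall_apply_eq_imp (Λ : Submodule ℤ V) (hΛ : Submodule.span k (Λ : Set V) = ⊤)
    (F : Finset (Equiv.Perm V)) (hF : ∀ σ ∈ F, σ ∈ affinePerms k V) :
    ∃ x ∈ Λ, ∀ σ ∈ F, σ x = x → σ = 1 := by
  induction F using Finset.induction_on with
  | empty => exact ⟨0, Λ.zero_mem, by simp⟩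
  | insert σ F _ ih =>
    obtain ⟨x, hx, hxF⟩ := ih fun τ hτ => hF τ (Finset.mem_insert_of_mem hτ)
    by_cases hσ : σ = 1
    · exact ⟨x, hx, fun τ hτ hfix => (Finset.mem_insert.1 hτ).elim (· ▸ hσ) (hxF τ · hfix)⟩
    obtain ⟨f, hf⟩ := hF σ (Finset.mem_insert_self σ F)
    have hv : ∃ v ∈ Λ, ¬(f x = x ∧ f.linear v = v) := by
      by_contra! hall
      refine hσ (Equiv.ext fun y => ?_)
      have hlin : ∀ z, f.linear z = z := fun z => by
        have : (⊤ : Submodule k V) ≤ LinearMap.eqLocus f.linear LinearMap.id := by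
          rw [← hΛ, Submodule.span_le]
          exact fun v hv => (hall v hv).2
        exact this Submodule.mem_top
      have hfx : f x = x := (hall 0 Λ.zero_mem).1
      rw [← congrFun hf, ← vsub_vadd y x, f.map_vadd, hlin, hfx]
      simp
    obtain ⟨v, hvΛ, hv⟩ := hv
    have hfin : ∀ τ ∈ insert σ F, {n : ℤ | τ ≠ 1 ∧ τ (x + n • v) = x + n • v}.Finite := by
      intro τ hτ
      rcases Finset.mem_insert.1 hτ with rfl | hτ
      · exact (finite_setOf_apply_add_zsmul_eq f hv).subset fun n hn => by
          simpa [hf] using hn.2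
      by_cases hτ1 : τ = 1
      · simp [hτ1]
      obtain ⟨g, hg⟩ := hF τ (Finset.mem_insert_of_mem hτ)
      have hgx : ¬(g x = x ∧ g.linear v = v) := fun h =>
        hτ1 (hxF τ hτ (by rw [← congrFun hg]; exact h.1))
      exact (finite_setOf_apply_add_zsmul_eq g hgx).subset fun n hn => by
        simpa [hg] using hn.2
    obtain ⟨n, hn⟩ := (Set.Finite.biUnion (insert σ F).finite_toSet hfin).infinite_compl.nonempty
    refine ⟨x + n • v, Λ.add_mem hx (Λ.smul_mem n hvΛ), fun τ hτ hfix => ?_⟩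
    by_contra hτ1
    exact hn (Set.mem_biUnion hτ ⟨hτ1, hfix⟩)

end LatticePoints

section Words

variable {V : Type*} [NormedAddCommGroup V] [InnerProductSpace ℝ V] {ι : Type*}

def IsReflWord (c : ℝ) (a : ι → V × ℤ) (l : List (ι × Equiv.Perm V)) : Prop :=
  ∀ p ∈ l, ∀ x, p.2 x = sAff c (a p.1) x

def wordPerm (l : List (ι × Equiv.Perm V)) : Equiv.Perm V := (l.map Prod.snd).prod

def hatTWord {R : Type*} [Field R] (c : ℝ) (τ : V × ℤ → R) (a : ι → V × ℤ)
    (l : List (ι × Equiv.Perm V)) : (V → R) → V → R :=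
  (l.map fun p => hatT c τ (a p.1)).foldr (· ∘ ·) id

variable {c : ℝ} {a : ι → V × ℤ}

lemma IsReflWord.sublist {l m : List (ι × Equiv.Perm V)} (hl : IsReflWord c a l)
    (hm : m.Sublist l) : IsReflWord c a m :=
  fun p hp => hl p (hm.subset hp)

lemma inv_eq_self_of_sAff {e : Equiv.Perm V} {b : V × ℤ} (hb : b.1 ≠ 0)
    (he : ∀ x, e x = sAff c b x) : e⁻¹ = e :=
  inv_eq_of_mul_eq_one_right <| Equiv.ext fun x => by
    simp only [Equiv.Perm.mul_apply, he, sAff_sAff c hb, Equiv.Perm.one_apply]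

lemma wordPerm_inv (ha : ∀ i, (a i).1 ≠ 0) {l : List (ι × Equiv.Perm V)}
    (hl : IsReflWord c a l) : (wordPerm l)⁻¹ = wordPerm l.reverse := by
  rw [wordPerm, wordPerm, List.prod_inv_reverse, List.map_reverse, List.map_map]
  congr 2
  exact List.map_congr_left fun p hp => inv_eq_self_of_sAff (ha p.1) (hl p hp)

lemma wordPerm_cons_inv_apply (ha : ∀ i, (a i).1 ≠ 0) {p : ι × Equiv.Perm V}
    {l : List (ι × Equiv.Perm V)} (hl : IsReflWord c a (p :: l)) (x : V) :
    (wordPerm (p :: l))⁻¹ x = (wordPerm l)⁻¹ (p.2 x) := by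
  rw [wordPerm, List.map_cons, List.prod_cons, mul_inv_rev, Equiv.Perm.mul_apply,
    inv_eq_self_of_sAff (ha p.1) (hl p List.mem_cons_self)]
  rfl

variable {R : Type*} [Field R] {τ : V × ℤ → R}

lemma exists_hatT_eq (b : V × ℤ) (hτ : τ b ≠ 0) (x : V) :
    ∃ A B : R, A ≠ 0 ∧ ∀ f, hatT c τ b f x = A * f (sAff c b x) + B * f x := by
  by_cases hpos : 0 < aval c b x
  · exact ⟨τ b, 0, hτ, fun f => by simp [hatT, hpos]⟩
  by_cases hzero : aval c b x = 0
  · refine ⟨τ b, 0, hτ, fun f => ?_⟩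
    simp [hatT, hzero, sAff]
  · exact ⟨(τ b)⁻¹, τ b - (τ b)⁻¹, inv_ne_zero hτ, fun f => by simp [hatT, hpos, hzero]⟩

lemma exists_hatTWord_apply_eq (hτ : ∀ i, τ (a i) ≠ 0) (ha : ∀ i, (a i).1 ≠ 0) :
    ∀ {l : List (ι × Equiv.Perm V)}, IsReflWord c a l → ∀ (f : V → R) (x : V),
      (∀ m, m.Sublist l → m ≠ l → f ((wordPerm m)⁻¹ x) = 0) →
      ∃ C ≠ 0, hatTWord c τ a l f x = C * f ((wordPerm l)⁻¹ x)
  | [], _, f, x, _ => ⟨1, one_ne_zero, by simp [hatTWord, wordPerm]⟩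
  | p :: l, hl, f, x, hf => by
    have hp : ∀ y, p.2 y = sAff c (a p.1) y := hl p List.mem_cons_self
    have hl' : IsReflWord c a l := hl.sublist (List.sublist_cons_self p l)
    obtain ⟨C, hC, hrefl⟩ := exists_hatTWord_apply_eq hτ ha hl' f (p.2 x)
      fun m hm hne => by
        rw [← wordPerm_cons_inv_apply ha (hl.sublist (hm.cons_cons p))]
        exact hf (p :: m) (hm.cons_cons p) (by simpa using hne)
    obtain ⟨C', -, hstay⟩ := exists_hatTWord_apply_eq hτ ha hl' f x
      fun m hm hne => hf m (hm.cons p) fun h => by simpa [h] using hm.length_le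
    have hstay0 : hatTWord c τ a l f x = 0 := by
      rw [hstay, hf l (List.sublist_cons_self p l) (List.cons_ne_self p l).symm, mul_zero]
    obtain ⟨A, B, hA, hT⟩ := exists_hatT_eq (a p.1) (hτ p.1) x
    refine ⟨A * C, mul_ne_zero hA hC, ?_⟩
    change hatT c τ (a p.1) (hatTWord c τ a l f) x = _
    rw [hT, ← hp, hrefl, hstay0, wordPerm_cons_inv_apply ha hl]
    ring

lemma hatTWord_apply_eq_zero (hτ : ∀ i, τ (a i) ≠ 0) (ha : ∀ i, (a i).1 ≠ 0)
    {l : List (ι × Equiv.Perm V)} (hl : IsReflWord c a l) (f : V → R) (x : V)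
    (hf : ∀ m, m.Sublist l → f ((wordPerm m)⁻¹ x) = 0) : hatTWord c τ a l f x = 0 := by
  obtain ⟨C, -, h⟩ := exists_hatTWord_apply_eq hτ ha hl f x fun m hm _ => hf m hm
  rw [h, hf l (List.Sublist.refl l), mul_zero]

end Words

namespace RootSystemData

variable {V : Type*} [NormedAddCommGroup V] [InnerProductSpace ℝ V] (D : RootSystemData V)

lemma neg_mem_R0 {α : V} (h : α ∈ D.R0) : -α ∈ D.R0 := by
  have := D.reflect_mem α h α h
  rwa [inner_self_coroot (D.ne_zero α h), two_smul, sub_add_cancel_left] at this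

lemma hshort_mem_R0 : D.hshort ∈ D.R0 := D.pos_subset D.hshort_mem

lemma top_le_span_simpleRoot : ⊤ ≤ Submodule.span ℝ (Set.range D.simpleRoot) := by
  have hpos : ∀ α ∈ D.pos, α ∈ Submodule.span ℝ (Set.range D.simpleRoot) := by
    intro α hα
    obtain ⟨k, rfl⟩ := D.pos_natCombo α hα
    exact Submodule.sum_mem _ fun j _ =>
      Submodule.smul_mem _ _ (Submodule.subset_span ⟨j, rfl⟩)
  rw [← D.span_top, Submodule.span_le]
  intro α hα
  rcases D.pos_or_neg α hα with h | h
  · exact hpos α h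
  · simpa using Submodule.neg_mem _ (hpos _ h)

def simpleBasis : Module.Basis (Fin D.n) ℝ V :=
  basisOfTopLeSpanOfCardEqFinrank D.simpleRoot D.top_le_span_simpleRoot (by simp [D.rank_eq])

lemma simpleBasis_apply (j : Fin D.n) : D.simpleBasis j = D.simpleRoot j := by
  simp [simpleBasis]

lemma simpleBasis_repr_natCombo (k : Fin D.n → ℕ) (j : Fin D.n) :
    D.simpleBasis.repr (∑ i, (k i : ℝ) • D.simpleRoot i) j = k j := by
  simp_rw [← D.simpleBasis_apply]
  rw [Module.Basis.repr_sum_self]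

lemma simpleBasis_repr_nonneg {α : V} (hα : α ∈ D.pos) (j : Fin D.n) :
    0 ≤ D.simpleBasis.repr α j := by
  obtain ⟨k, rfl⟩ := D.pos_natCombo α hα
  rw [simpleBasis_repr_natCombo]
  positivity

/-- Otherwise `s_δ ϑ` would be a root of the same length as `ϑ` with `ϑ - s_δ ϑ` a negative
multiple of `δ`, contradicting that `ϑ` is highest among the short roots. -/
lemma inner_hshort_nonneg {δ : V} (hδ : δ ∈ D.pos) : 0 ≤ ⟪δ, D.hshort⟫ := by
  by_contra! hneg
  have hδ0 := D.ne_zero δ (D.pos_subset hδ)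
  have ht : ⟪D.hshort, coroot δ⟫ < 0 := by
    rw [← not_le, inner_coroot_nonneg_iff _ hδ0, real_inner_comm]
    exact hneg.not_ge
  obtain ⟨m, hm⟩ := D.hshort_highest _
    (D.reflect_mem δ (D.pos_subset hδ) _ D.hshort_mem_R0) (norm_reflect hδ0 _)
  rw [sub_sub_cancel] at hm
  refine hδ0 (D.simpleBasis.ext_elem_iff.2 fun j => ?_)
  have hj := congrArg (fun x => D.simpleBasis.repr x j) hm
  simp only [map_smul, Finsupp.smul_apply, smul_eq_mul, simpleBasis_repr_natCombo] at hj
  have h0 := D.simpleBasis_repr_nonneg hδ j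
  have hm0 : (0 : ℝ) ≤ m j := Nat.cast_nonneg _
  simp only [map_zero, Finsupp.coe_zero, Pi.zero_apply]
  nlinarith

/-- Cauchy–Schwarz and `‖ϑ‖ ≤ ‖β‖`; equality in both forces `β = -ϑ`. -/
lemma neg_two_lt_inner_hshort_coroot {β : V} (hβ : β ∈ D.R0) (hne : β ≠ -D.hshort) :
    -2 < ⟪D.hshort, coroot β⟫ := by
  have hβn : 0 < ‖β‖ := norm_pos_iff.2 (D.ne_zero β hβ)
  have hle : ‖D.hshort‖ ≤ ‖β‖ := D.hshort_short β hβ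
  have hCS : -(‖D.hshort‖ * ‖β‖) ≤ ⟪D.hshort, β⟫ :=
    neg_le_of_abs_le (abs_real_inner_le_norm _ _)
  rw [inner_coroot, real_inner_self_eq_norm_sq, lt_div_iff₀ (by positivity)]
  by_contra! h
  have hnorm : ‖D.hshort‖ = ‖β‖ := by nlinarith
  have hinner : ⟪D.hshort, -β⟫ = ‖D.hshort‖ * ‖-β‖ := by
    rw [inner_neg_right, norm_neg]
    nlinarith
  have hpar := inner_eq_norm_mul_iff_real.1 hinner
  rw [norm_neg, hnorm] at hpar
  exact hne (by rw [smul_right_injective V hβn.ne' hpar, neg_neg])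

lemma reflect_simpleRoot_mem_pos (j : Fin D.n) {β : V} (hβ : β ∈ D.pos)
    (hne : β ≠ D.simpleRoot j) :
    β - ⟪β, coroot (D.simpleRoot j)⟫ • D.simpleRoot j ∈ D.pos := by
  have hαj : D.simpleRoot j ∈ D.R0 := D.pos_subset (D.simpleRoot_mem j)
  rcases D.pos_or_neg _ (D.reflect_mem _ hαj β (D.pos_subset hβ)) with h | h
  · exact h
  exfalso
  have hcoord : ∀ i ≠ j, D.simpleBasis.repr β i = 0 := by
    intro i hi
    have h1 := D.simpleBasis_repr_nonneg h i
    have h2 := D.simpleBasis_repr_nonneg hβ i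
    rw [neg_sub, map_sub, map_smul, ← D.simpleBasis_apply, Module.Basis.repr_self] at h1
    simp only [Finsupp.coe_sub, Finsupp.coe_smul, Pi.sub_apply, Pi.smul_apply,
      Finsupp.single_apply, hi.symm, if_false, smul_zero, zero_sub] at h1
    linarith
  have hβeq : β = D.simpleBasis.repr β j • D.simpleRoot j := by
    conv_lhs => rw [← D.simpleBasis.sum_repr β]
    rw [Finset.sum_eq_single j (fun i _ hi => by rw [hcoord i hi, zero_smul]) (by simp),
      D.simpleBasis_apply]
  rcases D.reduced _ hαj _ (hβeq ▸ D.pos_subset hβ) with h1 | h1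
  · exact hne (by rw [hβeq, h1, one_smul])
  · exact D.pos_not_both _ (D.simpleRoot_mem j) (by rwa [hβeq, h1, neg_one_smul] at hβ)

lemma aSimple_zero : D.aSimple 0 = (-D.hshort, 1) := rfl

lemma aSimple_succ (i : Fin D.n) : D.aSimple i.succ = (D.simpleRoot i, 0) := rfl

lemma aSimple_fst_mem (j : Fin (D.n + 1)) : (D.aSimple j).1 ∈ D.R0 := by
  cases j using Fin.cases with
  | zero => exact D.neg_mem_R0 D.hshort_mem_R0
  | succ i => exact D.pos_subset (D.simpleRoot_mem i)

lemma aSimple_fst_ne_zero (j : Fin (D.n + 1)) : (D.aSimple j).1 ≠ 0 :=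
  D.ne_zero _ (D.aSimple_fst_mem j)

lemma isAffPos_reflRoot_aSimple_succ (i : Fin D.n) {a : V × ℤ} (ha : D.IsAffPos a)
    (hne : a ≠ D.aSimple i.succ) : D.IsAffPos (reflRoot (D.aSimple i.succ) a) := by
  obtain ⟨hβ, hr⟩ := ha
  rw [aSimple_succ] at hne ⊢
  refine ⟨D.reflect_mem _ (D.pos_subset (D.simpleRoot_mem i)) _ hβ, ?_⟩
  simp only [reflRoot, zero_mul, sub_zero]
  refine hr.imp_right fun ⟨hr0, hpos⟩ => ⟨hr0, D.reflect_simpleRoot_mem_pos i hpos ?_⟩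
  exact fun h => hne (Prod.ext h hr0)

lemma reflRoot_aSimple_zero {a : V × ℤ} {k : ℤ} (hk : ⟪D.hshort, coroot a.1⟫ = k) :
    reflRoot (D.aSimple 0) a = (a.1 - ⟪a.1, coroot D.hshort⟫ • D.hshort, a.2 + k) := by
  rw [aSimple_zero, reflRoot]
  ext
  · simp [coroot_neg]
  · simp [inner_neg_left, hk, ← Int.cast_neg, Int.floor_intCast]

/-- `s_ϑ β` pairs positively with `ϑ`, so it is positive since `ϑ` is dominant. -/
lemma reflect_hshort_mem_pos {β : V} (hβ : β ∈ D.R0) (hneg : ⟪D.hshort, β⟫ < 0) :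
    β - ⟪β, coroot D.hshort⟫ • D.hshort ∈ D.pos := by
  have hϑ0 : D.hshort ≠ 0 := D.ne_zero _ D.hshort_mem_R0
  have hpair : 0 < ⟪β - ⟪β, coroot D.hshort⟫ • D.hshort, D.hshort⟫ := by
    rw [inner_sub_left, real_inner_smul_left, real_inner_comm D.hshort, inner_coroot,
      real_inner_comm D.hshort]
    field_simp [inner_self_ne_zero.2 hϑ0]
    linarith
  refine (D.pos_or_neg _ (D.reflect_mem _ D.hshort_mem_R0 _ hβ)).resolve_right fun hpos => ?_
  have := D.inner_hshort_nonneg hpos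
  rw [inner_neg_left] at this
  linarith

lemma isAffPos_reflRoot_aSimple_zero_neg_hshort {r : ℤ} (hr : 2 ≤ r) :
    D.IsAffPos (reflRoot (D.aSimple 0) (-D.hshort, r)) := by
  have hϑ0 : D.hshort ≠ 0 := D.ne_zero _ D.hshort_mem_R0
  have hk : ⟪D.hshort, coroot (-D.hshort, r).1⟫ = ((-2 : ℤ) : ℝ) := by
    rw [coroot_neg, inner_neg_right, inner_self_coroot hϑ0]
    norm_num
  have hrefl : -D.hshort - ⟪-D.hshort, coroot D.hshort⟫ • D.hshort = D.hshort := by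
    rw [inner_neg_left, inner_self_coroot hϑ0]
    module
  rw [D.reflRoot_aSimple_zero hk, IsAffPos]
  dsimp only
  rw [hrefl]
  refine ⟨D.hshort_mem_R0, ?_⟩
  by_cases h : r + -2 = 0
  · exact Or.inr ⟨h, D.hshort_mem⟩
  · exact Or.inl (by omega)

/-- Writing `a = β + r c` and `k = ⟨ϑ, β∨⟩ ≥ -1` (for `β ≠ -ϑ`), `s₀ a = s_ϑ β + (r + k) c`. -/
lemma isAffPos_reflRoot_aSimple_zero {a : V × ℤ} (ha : D.IsAffPos a) (hne : a ≠ D.aSimple 0) :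
    D.IsAffPos (reflRoot (D.aSimple 0) a) := by
  obtain ⟨β, r⟩ := a
  obtain ⟨hβ, hr⟩ := ha
  dsimp only at hβ hr
  by_cases hβϑ : β = -D.hshort
  · subst hβϑ
    refine D.isAffPos_reflRoot_aSimple_zero_neg_hshort ?_
    rcases hr with hr | ⟨-, hneg⟩
    · have : r ≠ 1 := fun h => hne (by rw [h, aSimple_zero])
      omega
    · exact absurd hneg (D.pos_not_both _ D.hshort_mem)
  have hβ0 : β ≠ 0 := D.ne_zero _ hβ
  obtain ⟨k, hk⟩ := D.crystallographic β hβ D.hshort D.hshort_mem_R0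
  have hk1 : -1 ≤ k := by
    have := D.neg_two_lt_inner_hshort_coroot hβ hβϑ
    rw [hk] at this
    have : -2 < k := by exact_mod_cast this
    omega
  rw [D.reflRoot_aSimple_zero hk]
  refine ⟨D.reflect_mem _ D.hshort_mem_R0 _ hβ, ?_⟩
  dsimp only
  rcases hr with hr | ⟨hr0, hβpos⟩
  · by_cases h : 1 ≤ r + k
    · exact Or.inl h
    refine Or.inr ⟨by omega, D.reflect_hshort_mem_pos hβ ?_⟩
    rw [← not_le, ← inner_coroot_nonneg_iff _ hβ0, hk]
    have : k = -1 := by omega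
    simp [this]
  · have hk0 : 0 ≤ k := by
      have h := (inner_coroot_nonneg_iff D.hshort hβ0).2
        (by rw [real_inner_comm]; exact D.inner_hshort_nonneg hβpos)
      rw [hk] at h
      exact_mod_cast h
    by_cases h : k = 0
    · refine Or.inr ⟨by omega, ?_⟩
      have : ⟪β, coroot D.hshort⟫ = 0 := by
        rw [inner_coroot_eq_zero_iff _ (D.ne_zero _ D.hshort_mem_R0), real_inner_comm,
          ← inner_coroot_eq_zero_iff _ hβ0, hk, h, Int.cast_zero]
      rwa [this, zero_smul, sub_zero]
    · exact Or.inl (by omega)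

lemma isAffPos_reflRoot_aSimple (j : Fin (D.n + 1)) {a : V × ℤ} (ha : D.IsAffPos a)
    (hne : a ≠ D.aSimple j) : D.IsAffPos (reflRoot (D.aSimple j) a) := by
  cases j using Fin.cases with
  | zero => exact D.isAffPos_reflRoot_aSimple_zero ha hne
  | succ i => exact D.isAffPos_reflRoot_aSimple_succ i ha hne

lemma RW_mul_subset {c : ℝ} {w e : Equiv.Perm V} {j : Fin (D.n + 1)}
    (he : ∀ x, e x = sAff c (D.aSimple j) x) :
    D.RW c (w * e) ⊆ insert (D.aSimple j) (reflRoot (D.aSimple j) '' D.RW c w) := by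
  rintro a ⟨hapos, b, hbneg, hmap⟩
  by_cases haj : a = D.aSimple j
  · exact haj ▸ Set.mem_insert _ _
  have hj := D.aSimple_fst_ne_zero j
  have hk := D.crystallographic a.1 hapos.1 _ (D.aSimple_fst_mem j)
  refine Set.mem_insert_of_mem _ ⟨reflRoot (D.aSimple j) a,
    ⟨D.isAffPos_reflRoot_aSimple j hapos haj, b, hbneg, fun x => ?_⟩, reflRoot_reflRoot hj hk⟩
  rw [aval_reflRoot hj hk, ← he, ← hmap x, mul_inv_rev, Equiv.Perm.mul_apply,
    inv_eq_self_of_sAff hj he]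

lemma finite_RW_mul_and_len_le {c : ℝ} {w e : Equiv.Perm V} {j : Fin (D.n + 1)}
    (he : ∀ x, e x = sAff c (D.aSimple j) x) (hw : (D.RW c w).Finite) :
    (D.RW c (w * e)).Finite ∧ D.len c (w * e) ≤ D.len c w + 1 := by
  have hfin := (hw.image (reflRoot (D.aSimple j))).insert (D.aSimple j)
  refine ⟨hfin.subset (D.RW_mul_subset he), ?_⟩
  calc D.len c (w * e)
      ≤ (insert (D.aSimple j) (reflRoot (D.aSimple j) '' D.RW c w)).ncard :=
        Set.ncard_le_ncard (D.RW_mul_subset he) hfin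
    _ ≤ (reflRoot (D.aSimple j) '' D.RW c w).ncard + 1 := Set.ncard_insert_le _ _
    _ ≤ D.len c w + 1 := Nat.add_le_add_right (Set.ncard_image_le hw) 1

lemma finite_RW_mul_wordPerm_and_len_le {c : ℝ} :
    ∀ {l : List (Fin (D.n + 1) × Equiv.Perm V)}, IsReflWord c D.aSimple l →
      ∀ {w : Equiv.Perm V}, (D.RW c w).Finite →
        (D.RW c (w * wordPerm l)).Finite ∧ D.len c (w * wordPerm l) ≤ D.len c w + l.length
  | [], _, w, hw => by simpa [wordPerm] using hw
  | p :: l, hl, w, hw => by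
    obtain ⟨hfin, hlen⟩ := D.finite_RW_mul_and_len_le (hl p List.mem_cons_self) hw
    have hmul : w * wordPerm (p :: l) = w * p.2 * wordPerm l := by
      simp [wordPerm, mul_assoc]
    obtain ⟨hfin', hlen'⟩ :=
      finite_RW_mul_wordPerm_and_len_le (hl.sublist (List.sublist_cons_self p l)) hfin
    rw [hmul, List.length_cons]
    exact ⟨hfin', by omega⟩

/-- `ℓ(w) > 0` makes `R(w)` finite (`ncard` is `0` on infinite sets), hence also `R(u)` for
`u = w s_l⁻¹`, and then `ℓ(u s_l) ≤ |l|`. -/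
lemma mul_wordPerm_ne_of_length_lt {c : ℝ} {u w : Equiv.Perm V}
    {l : List (Fin (D.n + 1) × Equiv.Perm V)} (hu : D.len c u = 0)
    (hl : IsReflWord c D.aSimple l) (hlw : l.length < D.len c w) : u * wordPerm l ≠ w := by
  intro h
  have hw : (D.RW c w).Finite := Set.finite_of_ncard_pos (by unfold len at hlw; omega)
  have hurev : u = w * wordPerm l.reverse := by
    rw [← wordPerm_inv D.aSimple_fst_ne_zero hl, ← h, mul_inv_cancel_right]
  have hu_fin := (D.finite_RW_mul_wordPerm_and_len_le (l := l.reverse)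
    (fun p hp => hl p (List.mem_reverse.1 hp)) hw).1
  rw [← hurev] at hu_fin
  have := (D.finite_RW_mul_wordPerm_and_len_le hl hu_fin).2
  rw [h, hu] at this
  omega

lemma Wext_le_affinePerms (c : ℝ) : D.Wext c ≤ affinePerms ℝ V := by
  refine Subgroup.closure_le _ |>.2 ?_
  rintro e (⟨a, -, he⟩ | ⟨lam, -, he⟩)
  · refine ⟨⟨sAff c a, LinearMap.id - (innerSL ℝ (coroot a.1)).toLinearMap.smulRight a.1,
      fun p v => ?_⟩, funext fun x => (he x).symm⟩
    simp only [sAff, aval, vadd_eq_add, LinearMap.sub_apply, LinearMap.id_apply,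
      LinearMap.smulRight_apply, ContinuousLinearMap.coe_coe, innerSL_apply_apply,
      inner_add_left, add_smul, real_inner_comm v (coroot a.1)]
    abel
  · refine ⟨⟨fun x => x + c • lam, LinearMap.id, fun p v => ?_⟩, funext fun x => (he x).symm⟩
    simp [add_assoc]

lemma rootLattice_subset_weightLattice : D.rootLattice ⊆ D.weightLattice := by
  intro x hx α hα
  induction hx using Submodule.span_induction with
  | mem β hβ => exact D.crystallographic α hα β hβ
  | zero => exact ⟨0, by simp⟩
  | add x y _ _ hx hy =>
    obtain ⟨k, hk⟩ := hx
    obtain ⟨k', hk'⟩ := hy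
    exact ⟨k + k', by rw [inner_add_left, hk, hk', Int.cast_add]⟩
  | smul n x _ hx =>
    obtain ⟨k, hk⟩ := hx
    exact ⟨n * k, by rw [← Int.cast_smul_eq_zsmul ℝ, real_inner_smul_left, hk, Int.cast_mul]⟩

def IsReducedExpr (c : ℝ) (w u : Equiv.Perm V) (l : List (Fin (D.n + 1) × Equiv.Perm V)) :
    Prop :=
  u ∈ D.Wext c ∧ D.len c u = 0 ∧ IsReflWord c D.aSimple l ∧ w = u * wordPerm l ∧
    l.length = D.len c w

lemma eq_and_eq_of_mul_wordPerm_eq {c : ℝ} {v w₀ u : Equiv.Perm V}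
    {l m : List (Fin (D.n + 1) × Equiv.Perm V)} (hv : D.IsReducedExpr c v u l)
    (hmax : D.len c v ≤ D.len c w₀) (hm : m.Sublist l) (h : u * wordPerm m = w₀) :
    v = w₀ ∧ m = l := by
  obtain ⟨-, hu0, hl, hveq, hlen⟩ := hv
  by_cases hml : m = l
  · exact ⟨by rw [hveq, ← hml, h], hml⟩
  have hlt : m.length < D.len c w₀ :=
    (hm.length_le.lt_of_ne fun h' => hml (hm.eq_of_length h')).trans_le (hlen ▸ hmax)
  exact absurd h (D.mul_wordPerm_ne_of_length_lt hu0 (hl.sublist hm) hlt)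

lemma mul_wordPerm_mem_affinePerms {c : ℝ} {v u : Equiv.Perm V}
    {l m : List (Fin (D.n + 1) × Equiv.Perm V)} (hv : D.IsReducedExpr c v u l)
    (hm : m.Sublist l) : u * wordPerm m ∈ affinePerms ℝ V := by
  refine mul_mem (D.Wext_le_affinePerms c hv.1) (list_prod_mem fun e he => ?_)
  obtain ⟨p, hp, rfl⟩ := List.mem_map.1 he
  exact D.Wext_le_affinePerms c (Subgroup.subset_closure (Or.inl
    ⟨_, D.aSimple_fst_mem p.1, hv.2.2.1 p (hm.subset hp)⟩))

lemma exists_weight_separating {R : Type*} [Field R] {τ : V × ℤ → R}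
    (hτ : ∀ j, τ (D.aSimple j) ≠ 0) {c : ℝ} {S : Finset (Equiv.Perm V)}
    {u : Equiv.Perm V → Equiv.Perm V} {l : Equiv.Perm V → List (Fin (D.n + 1) × Equiv.Perm V)}
    (hS : ∀ v ∈ S, D.IsReducedExpr c v (u v) (l v)) {w₀ : Equiv.Perm V} (hw₀ : w₀ ∈ S)
    (hmax : ∀ v ∈ S, D.len c v ≤ D.len c w₀) :
    ∃ f : V → R, ∃ lam ∈ D.weightLattice,
      hatTWord c τ D.aSimple (l w₀) f ((u w₀)⁻¹ lam) ≠ 0 ∧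
      ∀ v ∈ S, v ≠ w₀ → hatTWord c τ D.aSimple (l v) f ((u v)⁻¹ lam) = 0 := by
  let F : Finset (Equiv.Perm V) :=
    S.biUnion fun v => ((l v).sublists.map fun m => u v * wordPerm m * w₀⁻¹).toFinset
  have hF : ∀ σ ∈ F, σ ∈ affinePerms ℝ V := by
    intro σ hσ
    obtain ⟨v, hv, hσ⟩ := Finset.mem_biUnion.1 hσ
    obtain ⟨m, hm, rfl⟩ := List.mem_map.1 (List.mem_toFinset.1 hσ)
    have hw₀' : w₀ ∈ affinePerms ℝ V := by
      rw [(hS w₀ hw₀).2.2.2.1]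
      exact D.mul_wordPerm_mem_affinePerms (hS w₀ hw₀) (List.Sublist.refl _)
    exact mul_mem (D.mul_wordPerm_mem_affinePerms (hS v hv) (List.mem_sublists.1 hm))
      (inv_mem hw₀')
  obtain ⟨lam, hlam, hfix⟩ := exists_mem_forall_apply_eq_imp (Submodule.span ℤ (D.R0 : Set V))
    (by rw [Submodule.span_span_of_tower, D.span_top]) F hF
  have hpt : ∀ v ∈ S, ∀ m, m.Sublist (l v) →
      (wordPerm m)⁻¹ ((u v)⁻¹ lam) = w₀⁻¹ lam → v = w₀ ∧ m = l v := by
    intro v hv m hm h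
    refine D.eq_and_eq_of_mul_wordPerm_eq (hS v hv) (hmax v hv) hm
      (mul_inv_eq_one.1 (hfix _ ?_ ?_))
    · exact Finset.mem_biUnion.2 ⟨v, hv, List.mem_toFinset.2
        (List.mem_map.2 ⟨m, List.mem_sublists.2 hm, rfl⟩)⟩
    · rw [Equiv.Perm.mul_apply, ← h]
      simp
  refine ⟨Pi.single (w₀⁻¹ lam) 1, lam, D.rootLattice_subset_weightLattice hlam, ?_, ?_⟩
  · obtain ⟨-, -, hl, hw₀eq, -⟩ := hS w₀ hw₀
    obtain ⟨C, hC, h⟩ := exists_hatTWord_apply_eq hτ D.aSimple_fst_ne_zero hl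
      (Pi.single (w₀⁻¹ lam) 1) ((u w₀)⁻¹ lam)
      fun m hm hne => Pi.single_eq_of_ne (fun h => hne (hpt w₀ hw₀ m hm h).2) _
    rwa [h, ← Equiv.Perm.mul_apply, ← mul_inv_rev, ← hw₀eq, Pi.single_eq_same, mul_one]
  · intro v hv hne
    exact hatTWord_apply_eq_zero hτ D.aSimple_fst_ne_zero (hS v hv).2.2.1 _ _
      fun m hm => Pi.single_eq_of_ne (fun h => hne (hpt v hv m hm h).1) _

end RootSystemData

open RootSystemData in
theorem statement1_general {V : Type*} [NormedAddCommGroup V] [InnerProductSpace ℝ V]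
    (D : RootSystemData V) (cz : ℤ)
    (τ : V × ℤ → ℂ) (hτ : D.IsMultiplicity (cz : ℝ) τ)
    (S : Finset (Equiv.Perm V))
    (coef : Equiv.Perm V → ℂ)
    (TW : Equiv.Perm V → (V → ℂ) → V → ℂ)
    (hTW : ∀ w ∈ S, ∃ u : Equiv.Perm V, u ∈ D.Wext (cz : ℝ) ∧ D.len (cz : ℝ) u = 0 ∧
      ∃ l : List (Fin (D.n + 1) × Equiv.Perm V),
        (∀ p ∈ l, ∀ x : V, p.2 x = sAff (cz : ℝ) (D.aSimple p.1) x) ∧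
        w = u * (l.map Prod.snd).prod ∧
        l.length = D.len (cz : ℝ) w ∧
        TW w = (fun (f : V → ℂ) (x : V) => f (u⁻¹ x)) ∘
          (l.map fun p => hatT (cz : ℝ) τ (D.aSimple p.1)).foldr (· ∘ ·) id)
    (hann : ∀ f : V → ℂ, ∀ lam ∈ D.weightLattice,
      ∑ w ∈ S, coef w * TW w f lam = 0) :
    ∀ w ∈ S, coef w = 0 := by
  choose! u hu hu0 l hl hwl hlen hTWl using hTW
  have hexpr : ∀ w ∈ S, D.IsReducedExpr cz w (u w) (l w) := fun w hw =>
    ⟨hu w hw, hu0 w hw, hl w hw, hwl w hw, hlen w hw⟩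
  have hTW : ∀ w ∈ S, ∀ f lam, TW w f lam = hatTWord cz τ D.aSimple (l w) f ((u w)⁻¹ lam) :=
    fun w hw f lam => by rw [hTWl w hw]; rfl
  refine forall_eq_zero_of_sum_mul_eq_zero_of_separating
    (fun w (x : (V → ℂ) × D.weightLattice) => TW w x.1 x.2) coef S ?_
    fun x => hann x.1 x.2 x.2.2
  intro s hs hne
  obtain ⟨w₀, hw₀, hmax⟩ := s.exists_max_image (D.len cz) hne
  obtain ⟨f, lam, hlam, hlead, hrest⟩ := D.exists_weight_separating
    (fun j => hτ.1 _ (D.aSimple_fst_mem j)) (fun v hv => hexpr v (hs hv)) hw₀ hmax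
  refine ⟨w₀, hw₀, (f, ⟨lam, hlam⟩), ?_, fun v hv hne => ?_⟩
  · rwa [hTW w₀ (hs hw₀)]
  · rw [hTW v (hs hv)]
    exact hrest v hv hne

open RootSystemData in
/-- for integral `c` larger than the Coxeter number `h(R₀) = ⟨ρ,ϑ∨⟩ + 1`,
the difference-reflection representation of the extended affine Hecke algebra on
functions over the weight lattice is faithful: the operators `T̂_w = T̂_u ∘ T̂_{j₁} ∘ ⋯
∘ T̂_{jℓ}` (built from reduced expressions `w = u s_{j₁} ⋯ s_{jℓ}`, `u ∈ Ω`,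
`ℓ = ℓ(w)`) are linearly independent. -/
theorem statement1 {V : Type*} [NormedAddCommGroup V] [InnerProductSpace ℝ V]
    (D : RootSystemData V) (cz : ℤ)
    (hc : ⟪D.rhoHalf, coroot D.hshort⟫ + 1 < (cz : ℝ))
    (τ : V × ℤ → ℂ) (hτ : D.IsMultiplicity (cz : ℝ) τ)
    (S : Finset (Equiv.Perm V)) (hS : ∀ w ∈ S, w ∈ D.Wext (cz : ℝ))
    (coef : Equiv.Perm V → ℂ)
    (TW : Equiv.Perm V → (V → ℂ) → V → ℂ)
    (hTW : ∀ w ∈ S, ∃ u : Equiv.Perm V, u ∈ D.Wext (cz : ℝ) ∧ D.len (cz : ℝ) u = 0 ∧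
      ∃ l : List (Fin (D.n + 1) × Equiv.Perm V),
        (∀ p ∈ l, ∀ x : V, p.2 x = sAff (cz : ℝ) (D.aSimple p.1) x) ∧
        w = u * (l.map Prod.snd).prod ∧
        l.length = D.len (cz : ℝ) w ∧
        TW w = (fun (f : V → ℂ) (x : V) => f (u⁻¹ x)) ∘
          (l.map fun p => hatT (cz : ℝ) τ (D.aSimple p.1)).foldr (· ∘ ·) id)
    (hann : ∀ f : V → ℂ, ∀ lam ∈ D.weightLattice,
      ∑ w ∈ S, coef w * TW w f lam = 0) :
    ∀ w ∈ S, coef w = 0 :=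
  statement1_general D cz τ hτ S coef TW hTW hann
end
end

section
/- Let μ ∈ P∨ and suppose ξ ∈ V satisfies the critical equation c ξ + ∑_{α∈R₀⁺} v_α(⟨ξ,α⟩) α∨ = 2π(ρ∨ + μ). Then ξ solves the Bethe-type equations: for every ν ∈ Q, e^{ic⟨ξ,ν⟩} = ∏_{α∈R₀⁺} ((1 − t_α e^{i⟨ξ,α⟩})/(t_α − e^{i⟨ξ,α⟩}))^{⟨ν,α∨⟩}. -/
open scoped RealInnerProductSpace BigOperators Classical

noncomputable section

/-! For `|t| < 1` the factor `(1 - t e^{ix}) / (t - e^{ix})` equals `e^{i(π - v_t(x))}`: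
both sides solve `r' = -i v_t'(x) r` with `r(0) = -1`. Pairing the critical equation with
`ν ∈ Q` gives `c⟨ξ,ν⟩ = ∑_{α>0} ⟨ν,α∨⟩ (π - v_α(⟨ξ,α⟩)) + 2π⟨ν,μ⟩`, in which `⟨ν,α∨⟩` and
`⟨ν,μ⟩` are integers, so exponentiating gives the Bethe equations. -/

lemma one_sub_two_mul_mul_cos_add_sq_pos {t : ℝ} (ht : |t| < 1) (y : ℝ) :
    0 < 1 - 2 * t * Real.cos y + t ^ 2 := by
  have hcos : t * Real.cos y ≤ |t| := by
    calc t * Real.cos y ≤ |t * Real.cos y| := le_abs_self _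
      _ = |t| * |Real.cos y| := abs_mul _ _
      _ ≤ |t| * 1 := by gcongr; exact Real.abs_cos_le_one y
      _ = |t| := mul_one _
  nlinarith [sq_abs t]

lemma hasDerivAt_mvfun {t : ℝ} (ht : |t| < 1) (x : ℝ) :
    HasDerivAt (mvfun t) ((1 - t ^ 2) / (1 - 2 * t * Real.cos x + t ^ 2)) x := by
  have hcont : Continuous fun y : ℝ => 1 / (1 - 2 * t * Real.cos y + t ^ 2) :=
    continuous_const.div (by fun_prop) fun y => (one_sub_two_mul_mul_cos_add_sq_pos ht y).ne'
  have h := (hcont.integral_hasStrictDerivAt 0 x).hasDerivAt.const_mul (1 - t ^ 2)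
  rw [div_eq_mul_inv, ← one_div]
  exact h

section MoebiusFactor

open Complex

lemma ofReal_sub_exp_I_mul_ne_zero {t : ℝ} (ht : |t| < 1) (y : ℝ) :
    (t : ℂ) - cexp (I * y) ≠ 0 := by
  intro h
  have hnorm := congrArg norm (sub_eq_zero.mp h)
  rw [norm_real, Real.norm_eq_abs, mul_comm, norm_exp_ofReal_mul_I] at hnorm
  exact ht.ne hnorm

lemma ofReal_one_sub_two_mul_mul_cos_add_sq_mul_exp (t y : ℝ) :
    ((1 - 2 * t * Real.cos y + t ^ 2 : ℝ) : ℂ) * cexp (I * y)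
      = (t - cexp (I * y)) * (t * cexp (I * y) - 1) := by
  have h2cos := two_cos (y : ℂ)
  have hinv : cexp (y * I) * cexp (-y * I) = 1 := by rw [← exp_add]; simp
  push_cast
  rw [mul_comm I]
  linear_combination (-(t : ℂ) * cexp (y * I)) * h2cos - (t : ℂ) * hinv

lemma hasDerivAt_one_sub_mul_exp_div_sub_exp {t : ℝ} (ht : |t| < 1) (y : ℝ) :
    HasDerivAt (fun x : ℝ => (1 - t * cexp (I * x)) / (t - cexp (I * x)))
      (-(I * ((1 - t ^ 2) / (1 - 2 * t * Real.cos y + t ^ 2) : ℝ)) *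
        ((1 - t * cexp (I * y)) / (t - cexp (I * y)))) y := by
  have hE : HasDerivAt (fun x : ℝ => cexp (I * x)) (I * cexp (I * y)) y := by
    simpa [mul_comm] using ((hasDerivAt_id (y : ℂ)).const_mul I).cexp.comp_ofReal
  have hD := ofReal_one_sub_two_mul_mul_cos_add_sq_mul_exp t y
  have hDne : ((1 - 2 * t * Real.cos y + t ^ 2 : ℝ) : ℂ) ≠ 0 :=
    ofReal_ne_zero.mpr (one_sub_two_mul_mul_cos_add_sq_pos ht y).ne'
  have hne := ofReal_sub_exp_I_mul_ne_zero ht y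
  refine ((hE.const_mul (t : ℂ)).const_sub 1 |>.div (hE.const_sub (t : ℂ)) hne).congr_deriv ?_
  rw [ofReal_div, ofReal_sub, ofReal_one, ofReal_pow]
  generalize cexp (I * y) = E at hD hne ⊢
  generalize ((1 - 2 * t * Real.cos y + t ^ 2 : ℝ) : ℂ) = D at hD hDne ⊢
  field_simp
  linear_combination (1 - (t : ℂ) ^ 2) * hD

lemma one_sub_mul_exp_div_sub_exp_eq_exp {t : ℝ} (ht : |t| < 1) (x : ℝ) :
    (1 - t * cexp (I * x)) / (t - cexp (I * x)) = cexp (I * (Real.pi - mvfun t x : ℝ)) := by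
  set F : ℝ → ℂ := fun y =>
    (1 - t * cexp (I * y)) / (t - cexp (I * y)) * cexp (I * mvfun t y) with hF
  have hF' : ∀ y, HasDerivAt F 0 y := fun y =>
    ((hasDerivAt_one_sub_mul_exp_div_sub_exp ht y).mul
      ((hasDerivAt_mvfun ht y).ofReal_comp.const_mul I).cexp).congr_deriv (by ring)
  have hconst : F x = F 0 :=
    is_const_of_deriv_eq_zero (fun y => (hF' y).differentiableAt) (fun y => (hF' y).deriv) x 0
  have hF0 : F 0 = -1 := by
    have ht1 : (t : ℂ) - 1 ≠ 0 := by simpa using ofReal_sub_exp_I_mul_ne_zero ht 0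
    simp only [hF, mvfun, intervalIntegral.integral_same, mul_zero, ofReal_zero, exp_zero,
      mul_one]
    field_simp
    ring
  rw [ofReal_sub, mul_sub, exp_sub, mul_comm I (Real.pi : ℂ), exp_pi_mul_I,
    eq_div_iff (exp_ne_zero _)]
  linear_combination hconst.trans hF0

lemma Complex.exp_I_mul_sum_int_mul_add_two_pi_int_mul {ι : Type*} (s : Finset ι) (k : ι → ℤ)
    (θ : ι → ℝ) (m : ℤ) :
    cexp (I * (∑ i ∈ s, k i * θ i + 2 * Real.pi * m : ℝ)) = ∏ i ∈ s, cexp (I * θ i) ^ k i := by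
  have h2pi : cexp (I * (2 * Real.pi * m : ℝ)) = 1 := by
    rw [← exp_int_mul_two_pi_mul_I m]
    push_cast
    ring_nf
  rw [ofReal_add, mul_add, exp_add, h2pi, mul_one, ofReal_sum, Finset.mul_sum, exp_sum]
  refine Finset.prod_congr rfl fun i _ => ?_
  rw [← exp_int_mul]
  push_cast
  ring_nf

end MoebiusFactor

lemma inner_mem_range_intCast_of_mem_span_int {V : Type*} [NormedAddCommGroup V]
    [InnerProductSpace ℝ V] {S : Set V} {w ν : V}
    (hS : ∀ β ∈ S, ⟪β, w⟫ ∈ Set.range ((↑) : ℤ → ℝ)) (hν : ν ∈ Submodule.span ℤ S) :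
    ⟪ν, w⟫ ∈ Set.range ((↑) : ℤ → ℝ) := by
  induction hν using Submodule.span_induction with
  | mem x hx => exact hS x hx
  | zero => exact ⟨0, by simp⟩
  | add x y _ _ hx hy =>
      obtain ⟨a, ha⟩ := hx
      obtain ⟨b, hb⟩ := hy
      exact ⟨a + b, by rw [inner_add_left, ← ha, ← hb, Int.cast_add]⟩
  | smul a x _ hx =>
      obtain ⟨b, hb⟩ := hx
      exact ⟨a * b, by rw [← Int.cast_smul_eq_zsmul ℝ, real_inner_smul_left, ← hb, Int.cast_mul]⟩

namespace RootSystemData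

variable {V : Type*} [NormedAddCommGroup V] [InnerProductSpace ℝ V] {D : RootSystemData V}

lemma inner_coroot_eq_floor {ν : V} (hν : ν ∈ D.rootLattice) {α : V} (hα : α ∈ D.R0) :
    ⟪ν, coroot α⟫ = ⌊⟪ν, coroot α⟫⌋ := by
  obtain ⟨k, hk⟩ := inner_mem_range_intCast_of_mem_span_int
    (fun β hβ => (D.crystallographic α hα β hβ).imp fun _ h => h.symm) hν
  rw [← hk, Int.floor_intCast]

lemma inner_mem_range_intCast_of_mem_coweightLattice {ν μ : V} (hν : ν ∈ D.rootLattice)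
    (hμ : μ ∈ D.coweightLattice) : ⟪ν, μ⟫ ∈ Set.range ((↑) : ℤ → ℝ) :=
  inner_mem_range_intCast_of_mem_span_int
    (fun β hβ => (hμ β hβ).imp fun _ h => by rw [real_inner_comm, h]) hν

lemma criticalEq.inner_eq {c : ℝ} {t : V → ℝ} {μ ξ : V} (h : D.criticalEq c t μ ξ) (ν : V) :
    c * ⟪ξ, ν⟫ = ∑ α ∈ D.pos, ⟪ν, coroot α⟫ * (Real.pi - mvfun (t α) ⟪ξ, α⟫)
      + 2 * Real.pi * ⟪ν, μ⟫ := by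
  have h' := congrArg (⟪ν, ·⟫) h
  simp only [rhoVee, inner_add_right, inner_sum, real_inner_smul_right,
    mul_comm (mvfun _ _)] at h'
  rw [real_inner_comm ν ξ]
  simp only [mul_sub, Finset.sum_sub_distrib, ← Finset.sum_mul]
  linarith

end RootSystemData

open RootSystemData in
theorem statement11_general {V : Type*} [NormedAddCommGroup V] [InnerProductSpace ℝ V]
    (D : RootSystemData V) (c : ℝ)
    (t : V → ℝ) (ht : ∀ α ∈ D.R0, t α ∈ Set.Ioo (-1 : ℝ) 1)
    (μ : V) (hμ : μ ∈ D.coweightLattice)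
    (ξ : V) (hcrit : D.criticalEq c t μ ξ) :
    ∀ ν ∈ D.rootLattice,
      Complex.exp (Complex.I * (c * ⟪ξ, ν⟫ : ℝ))
        = ∏ α ∈ D.pos,
            ((1 - (t α : ℂ) * Complex.exp (Complex.I * (⟪ξ, α⟫ : ℝ))) /
              ((t α : ℂ) - Complex.exp (Complex.I * (⟪ξ, α⟫ : ℝ))))
            ^ ⌊⟪ν, coroot α⟫⌋ := by
  intro ν hν
  obtain ⟨m, hm⟩ := inner_mem_range_intCast_of_mem_coweightLattice hν hμ
  have hsum : ∑ α ∈ D.pos, ⟪ν, coroot α⟫ * (Real.pi - mvfun (t α) ⟪ξ, α⟫)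
      = ∑ α ∈ D.pos, ⌊⟪ν, coroot α⟫⌋ * (Real.pi - mvfun (t α) ⟪ξ, α⟫) :=
    Finset.sum_congr rfl fun α hα => by rw [← inner_coroot_eq_floor hν (D.pos_subset hα)]
  rw [hcrit.inner_eq, hsum, ← hm, Complex.exp_I_mul_sum_int_mul_add_two_pi_int_mul]
  refine Finset.prod_congr rfl fun α hα => ?_
  rw [one_sub_mul_exp_div_sub_exp_eq_exp (abs_lt.mpr (ht α (D.pos_subset hα))) ⟪ξ, α⟫]

open RootSystemData in
/-- any solution `ξ` of the critical equation
`cξ + ∑_{α>0} v_α(⟨ξ,α⟩) α∨ = 2π(ρ∨+μ)` (with `μ ∈ P∨`) solves the Bethe-type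
equations. -/
theorem statement11 {V : Type*} [NormedAddCommGroup V] [InnerProductSpace ℝ V]
    (D : RootSystemData V) (c : ℝ) (hc : 0 < c)
    (t : V → ℝ) (ht : ∀ α ∈ D.R0, t α ∈ Set.Ioo (-1 : ℝ) 1)
    (htinv : ∀ α ∈ D.R0, ∀ β ∈ D.R0, (∃ w ∈ D.W0, w α = β) → t α = t β)
    (μ : V) (hμ : μ ∈ D.coweightLattice)
    (ξ : V) (hcrit : D.criticalEq c t μ ξ) :
    ∀ ν ∈ D.rootLattice,
      Complex.exp (Complex.I * (c * ⟪ξ, ν⟫ : ℝ))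
        = ∏ α ∈ D.pos,
            ((1 - (t α : ℂ) * Complex.exp (Complex.I * (⟪ξ, α⟫ : ℝ))) /
              ((t α : ℂ) - Complex.exp (Complex.I * (⟪ξ, α⟫ : ℝ))))
            ^ ⌊⟪ν, coroot α⟫⌋ :=
  statement11_general D c t ht μ hμ ξ hcrit
end
end

section
/- For μ ∈ P∨ let ξ_μ denote the unique global minimum of the strictly convex function 𝒱_μ. Then the map μ ↦ ξ_μ is injective on P∨: for μ, μ̃ ∈ P∨, ξ_μ = ξ_{μ̃} implies μ = μ̃. -/
open scoped RealInnerProductSpace BigOperators Classical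

noncomputable section

section Aux12

lemma myaux_denom_pos {t : ℝ} (h : |t| < 1) (y : ℝ) :
    0 < 1 - 2 * t * Real.cos y + t ^ 2 := by
  have h2 : 2 * t * Real.cos y ≤ 2 * |t| := by
    calc 2 * t * Real.cos y ≤ |2 * t * Real.cos y| := le_abs_self _
    _ = 2 * |t| * |Real.cos y| := by rw [abs_mul, abs_mul, abs_two]
    _ ≤ 2 * |t| * 1 := mul_le_mul_of_nonneg_left (Real.abs_cos_le_one y) (by positivity)
    _ = 2 * |t| := mul_one _
  nlinarith [sq_abs t, abs_nonneg t]

lemma myaux_cont {t : ℝ} (h : |t| < 1) :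
    Continuous fun y : ℝ => 1 / (1 - 2 * t * Real.cos y + t ^ 2) :=
  continuous_const.div (by continuity) fun y => (myaux_denom_pos h y).ne'

lemma myaux_primitive_hasDerivAt {g : ℝ → ℝ} (hg : Continuous g) (x : ℝ) :
    HasDerivAt (fun u => ∫ y in (0:ℝ)..u, g y) (g x) x :=
  intervalIntegral.integral_hasDerivAt_right (hg.intervalIntegrable 0 x)
    (hg.stronglyMeasurableAtFilter _ _) hg.continuousAt

lemma myaux_mvfun_continuous {t : ℝ} (h : |t| < 1) : Continuous (mvfun t) := by
  unfold mvfun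
  exact continuous_const.mul (continuous_iff_continuousAt.mpr fun x =>
    (myaux_primitive_hasDerivAt (myaux_cont h) x).continuousAt)

end Aux12

open RootSystemData in
/-- the assignment `μ ↦ ξ_μ` sending a coweight to the global minimum of
the strictly convex Morse function `𝒱_μ` is injective on the coweight lattice `P∨`. -/
theorem statement12 {V : Type*} [NormedAddCommGroup V] [InnerProductSpace ℝ V]
    (D : RootSystemData V) (c : ℝ) (hc : 0 < c)
    (t : V → ℝ) (ht : ∀ α ∈ D.R0, t α ∈ Set.Ioo (-1 : ℝ) 1)
    (htinv : ∀ α ∈ D.R0, ∀ β ∈ D.R0, (∃ w ∈ D.W0, w α = β) → t α = t β)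
    (xi : V → V)
    (hxi : ∀ μ ∈ D.coweightLattice, ∀ ζ : V, D.morse c t μ (xi μ) ≤ D.morse c t μ ζ) :
    ∀ μ ∈ D.coweightLattice, ∀ μ' ∈ D.coweightLattice, xi μ = xi μ' → μ = μ' := by
  intro μ hμ μ' hμ' hξ
  have key : ∀ v : V, ⟪μ - μ', v⟫ = 0 := by
    intro v
    set x := xi μ with hx
    set F : ℝ → ℝ := fun s => D.morse c t μ' (x + s • v) with hFdef
    have hpath : DifferentiableAt ℝ (fun s : ℝ => x + s • v) 0 :=
      (differentiableAt_const x).add ((differentiableAt_id).smul_const v)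
    have hFdiff : DifferentiableAt ℝ F 0 := by
      rw [hFdef]
      unfold RootSystemData.morse
      refine DifferentiableAt.add (DifferentiableAt.sub ?_ ?_) ?_
      · exact (differentiableAt_const _).mul (DifferentiableAt.inner ℝ hpath hpath)
      · exact (differentiableAt_const _).mul
          (DifferentiableAt.inner ℝ (differentiableAt_const _) hpath)
      · refine DifferentiableAt.fun_sum fun α hα => DifferentiableAt.const_mul ?_ _
        have hmem := ht α (D.pos_subset hα)
        have htα : |t α| < 1 := abs_lt.mpr ⟨hmem.1, hmem.2⟩
        have hin : DifferentiableAt ℝ (fun s : ℝ => ⟪x + s • v, α⟫) 0 :=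
          DifferentiableAt.inner ℝ hpath (differentiableAt_const α)
        have hprim : DifferentiableAt ℝ (fun u => ∫ y in (0:ℝ)..u, mvfun (t α) y)
            (⟪x + (0:ℝ) • v, α⟫) :=
          (myaux_primitive_hasDerivAt (myaux_mvfun_continuous htα) _).differentiableAt
        exact hprim.comp 0 hin
    have hFmin : IsLocalMin F 0 := by
      refine Filter.Eventually.of_forall fun s => ?_
      have h0 : F 0 = D.morse c t μ' (xi μ') := by
        rw [hFdef]; simp [hξ]
      rw [h0]; exact hxi μ' hμ' _
    have hd0 : deriv F 0 = 0 := hFmin.hasDerivAt_eq_zero hFdiff.hasDerivAt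
    have hmorse_eq : ∀ ζ : V, D.morse c t μ ζ
        = D.morse c t μ' ζ - 2 * Real.pi * ⟪μ - μ', ζ⟫ := by
      intro ζ
      unfold RootSystemData.morse
      have hsplit : ⟪D.rhoVee + μ, ζ⟫ = ⟪D.rhoVee + μ', ζ⟫ + ⟪μ - μ', ζ⟫ := by
        rw [← inner_add_left]; congr 1; abel
      rw [hsplit]; ring
    set G : ℝ → ℝ := fun s =>
      F s - 2 * Real.pi * ⟪μ - μ', x⟫ - s * (2 * Real.pi * ⟪μ - μ', v⟫) with hGdef
    have hGeq : ∀ s : ℝ, G s = D.morse c t μ (x + s • v) := by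
      intro s
      rw [hGdef, hFdef]
      simp only
      rw [hmorse_eq (x + s • v), inner_add_right, real_inner_smul_right]
      ring
    have hGmin : IsLocalMin G 0 := by
      refine Filter.Eventually.of_forall fun s => ?_
      rw [hGeq, hGeq]
      simp only [zero_smul, add_zero]
      exact hxi μ hμ _
    have hGd : HasDerivAt G (deriv F 0 - 2 * Real.pi * ⟪μ - μ', v⟫) 0 := by
      have h2 : HasDerivAt (fun s : ℝ => s * (2 * Real.pi * ⟪μ - μ', v⟫))
          (2 * Real.pi * ⟪μ - μ', v⟫) 0 := by
        simpa using (hasDerivAt_id (0:ℝ)).mul_const (2 * Real.pi * ⟪μ - μ', v⟫)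
      exact (hFdiff.hasDerivAt.sub_const _).sub h2
    have h3 : deriv F 0 - 2 * Real.pi * ⟪μ - μ', v⟫ = 0 :=
      hGmin.hasDerivAt_eq_zero hGd
    rw [hd0] at h3
    have hπ : (2 * Real.pi) ≠ 0 := by positivity
    have h4 : 2 * Real.pi * ⟪μ - μ', v⟫ = 0 := by linarith
    exact (mul_eq_zero.mp h4).resolve_left hπ
  have h := key (μ - μ')
  rw [inner_self_eq_zero] at h
  exact sub_eq_zero.mp h
end
end
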